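/- arXiv:1803.02216 — 5 statements merged into one kernel-verified Lean document; each statement's English description precedes it below -/
import Mathlib

section
/- Let τ be a positive integer and Δ ≥ 2 a real number. Let q_1, ..., q_τ be nonnegative reals with ∑_{i=1}^τ q_i = 1. Then ∏_{i=1}^τ (1 - q_i/(2e·Δ^{1/τ})) ≤ 1 - 1/(4e·Δ^{1/τ}). -/
open Finset

lemma prod_one_sub_le (ι : Type*) (s : Finset ι) (x : ι → ℝ)
    (hx : ∀ i ∈ s, 0 ≤ x i ∧ x i ≤ 1) :
    ∏ i ∈ s, (1 - x i) ≤ 1 - (∑ i ∈ s, x i) + (∑ i ∈ s, x i) ^ 2 / 2 := by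
  induction s using Finset.cons_induction with
  | empty => simp
  | cons a t ha ih =>
    rw [Finset.prod_cons, Finset.sum_cons]
    have hxa := hx a (Finset.mem_cons_self a t)
    have ih' := ih (fun i hi => hx i (Finset.mem_cons_of_mem hi))
    have hst : 0 ≤ ∑ i ∈ t, x i :=
      Finset.sum_nonneg fun i hi => (hx i (Finset.mem_cons_of_mem hi)).1
    nlinarith [mul_le_mul_of_nonneg_left ih' (by linarith [hxa.2] : (0:ℝ) ≤ 1 - x a),
      sq_nonneg (x a), sq_nonneg (∑ i ∈ t, x i), mul_nonneg hxa.1 hst,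
      mul_nonneg (mul_nonneg hxa.1 hst) hst]

theorem all_rounds_fail_bound (τ : ℕ) (hτ : 0 < τ) (Δ : ℝ) (hΔ : 2 ≤ Δ)
    (q : Fin τ → ℝ) (hq : ∀ i, 0 ≤ q i) (hsum : ∑ i, q i = 1) :
    ∏ i, (1 - q i / (2 * Real.exp 1 * Δ ^ ((1 : ℝ) / τ))) ≤
      1 - 1 / (4 * Real.exp 1 * Δ ^ ((1 : ℝ) / τ)) := by
  set c : ℝ := 2 * Real.exp 1 * Δ ^ ((1 : ℝ) / τ) with hc
  have hΔp : (1 : ℝ) ≤ Δ ^ ((1 : ℝ) / τ) := by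
    apply Real.one_le_rpow (by linarith) (by positivity)
  have he : (2 : ℝ) ≤ Real.exp 1 := by
    have := Real.add_one_le_exp 1; linarith
  have hc1 : (1 : ℝ) ≤ c := by
    rw [hc]; nlinarith
  have hc0 : (0 : ℝ) < c := by linarith
  have key := prod_one_sub_le (Fin τ) Finset.univ (fun i => q i / c) (by
    intro i _
    constructor
    · exact div_nonneg (hq i) hc0.le
    · rw [div_le_one hc0]
      have : q i ≤ ∑ j, q j := Finset.single_le_sum (fun j _ => hq j) (Finset.mem_univ i)
      linarith)
  rw [← Finset.sum_div, hsum] at key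
  refine key.trans ?_
  have h4 : 4 * Real.exp 1 * Δ ^ ((1 : ℝ) / τ) = 2 * c := by rw [hc]; ring
  rw [h4, div_pow, one_pow]
  have h1 : 1 / c ≤ 1 := by rw [div_le_one hc0]; exact hc1
  have h0 : 0 ≤ 1 / c := by positivity
  have h2 : 1 / c ^ 2 = (1 / c) * (1 / c) := by rw [sq]; field_simp
  have h3 : 1 / (2 * c) = (1 / c) / 2 := by field_simp
  rw [h2, h3]
  nlinarith
end

section
/- Let Δ ≥ 2e and let τ be a positive integer with τ ≤ log_{2e}(Δ). Let q_1, ..., q_τ be nonnegative reals with ∑_{i=1}^τ q_i = 1, and let β = log_{2e}(Δ)/τ ≥ 1. Then ∏_{i=1}^τ (1 - q_i·β/(2Δ^{1/τ})) ≤ 1 - β/(4Δ^{1/τ}). -/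
open Finset

theorem all_rounds_fail_bound_beta (Δ : ℝ) (hΔ : 2 * Real.exp 1 ≤ Δ)
    (τ : ℕ) (hτ : 0 < τ) (hτle : (τ : ℝ) ≤ Real.logb (2 * Real.exp 1) Δ)
    (q : Fin τ → ℝ) (hq : ∀ i, 0 ≤ q i) (hsum : ∑ i, q i = 1)
    (β : ℝ) (hβ : β = Real.logb (2 * Real.exp 1) Δ / τ) :
    ∏ i, (1 - q i * β / (2 * Δ ^ ((1 : ℝ) / τ))) ≤
      1 - β / (4 * Δ ^ ((1 : ℝ) / τ)) := by
  have he : (1:ℝ) < 2 * Real.exp 1 := by nlinarith [Real.exp_one_gt_d9]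
  have hΔ1 : (1:ℝ) < Δ := lt_of_lt_of_le he hΔ
  have hΔ0 : (0:ℝ) < Δ := by linarith
  have hτR : (0:ℝ) < τ := by exact_mod_cast hτ
  have hβ1 : 1 ≤ β := by rw [hβ, le_div_iff₀ hτR]; linarith
  set D : ℝ := Δ ^ ((1:ℝ)/τ) with hD
  have hD0 : 0 < D := Real.rpow_pos_of_pos hΔ0 _
  have hlog : (2 * Real.exp 1) ^ (Real.logb (2 * Real.exp 1) Δ) = Δ :=
    Real.rpow_logb (by linarith) (ne_of_gt he) hΔ0
  have hDβ : D = (2 * Real.exp 1) ^ β := by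
    rw [hD, hβ]
    conv_lhs => rw [← hlog]
    rw [← Real.rpow_mul (by linarith : (0:ℝ) ≤ 2 * Real.exp 1), mul_one_div]
  have hlog2e : 1 ≤ Real.log (2 * Real.exp 1) := by
    rw [Real.log_mul (by norm_num) (ne_of_gt (Real.exp_pos 1)), Real.log_exp]
    nlinarith [Real.log_pos (by norm_num : (1:ℝ) < 2)]
  have hDge : β ≤ D := by
    rw [hDβ, Real.rpow_def_of_pos (by linarith)]
    have h1 : β * 1 ≤ Real.log (2 * Real.exp 1) * β := by nlinarith
    nlinarith [Real.add_one_le_exp (Real.log (2 * Real.exp 1) * β)]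
  set x : ℝ := β / (2 * D) with hx
  have hx0 : 0 < x := div_pos (by linarith) (by linarith)
  have hx1 : x ≤ 1 := by
    rw [hx, div_le_one (by linarith)]; linarith
  have hq1 : ∀ i, q i ≤ 1 := by
    intro i
    calc q i ≤ ∑ j, q j := Finset.single_le_sum (fun j _ => hq j) (mem_univ i)
    _ = 1 := hsum
  have key : ∀ i, (1 - q i * β / (2 * D)) = 1 - q i * x := by
    intro i; rw [hx]; ring
  have hfac_nonneg : ∀ i ∈ Finset.univ, 0 ≤ 1 - q i * x := by
    intro i _
    nlinarith [hq i, hq1 i]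
  have hfac_le : ∀ i ∈ Finset.univ, 1 - q i * x ≤ Real.exp (-(q i * x)) := by
    intro i _
    nlinarith [Real.add_one_le_exp (-(q i * x))]
  calc ∏ i, (1 - q i * β / (2 * D))
      = ∏ i, (1 - q i * x) := by simp_rw [key]
    _ ≤ ∏ i, Real.exp (-(q i * x)) := Finset.prod_le_prod hfac_nonneg hfac_le
    _ = Real.exp (∑ i, -(q i * x)) := (Real.exp_sum _ _).symm
    _ = Real.exp (-x) := by
        congr 1
        rw [Finset.sum_neg_distrib, ← Finset.sum_mul, hsum, one_mul]
    _ ≤ 1 / (1 + x) := by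
        rw [Real.exp_neg, one_div]
        exact inv_anti₀ (by linarith) (by linarith [Real.add_one_le_exp x])
    _ ≤ 1 - x / 2 := by
        rw [div_le_iff₀ (by linarith : (0:ℝ) < 1 + x)]
        nlinarith
    _ = 1 - β / (4 * D) := by rw [hx]; ring
end

section
/- Let Δ ≥ 2e be real and τ a positive integer with τ ≤ log_{2e}(Δ). For each i ∈ {1,...,τ} and p_i = Δ^{-i/τ}·log_{2e}(Δ)/τ, and for every integer d with Δ^{(i-1)/τ} < d ≤ Δ^{i/τ}, one has p_i·d·(1-p_i)^{d-1} ≥ log_{2e}(Δ)/(2·Δ^{1/τ}·τ). -/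
private lemma frlb_aux_exp_half (x : ℝ) : x ≤ Real.exp (x / 2) := by
  have ha := Real.add_one_le_exp (x / 4)
  have hb : Real.exp (x / 4) * Real.exp (x / 4) = Real.exp (x / 2) := by
    rw [← Real.exp_add]; ring_nf
  nlinarith [Real.exp_pos (x / 4), sq_nonneg (x / 4 - 1)]

private lemma frlb_aux_one_sub (p : ℝ) (h0 : 0 ≤ p) (h19 : p < 0.19) :
    Real.exp (-(p + p ^ 2)) ≤ 1 - p := by
  have h1 : 1 + (p + p ^ 2) / 2 ≤ Real.exp ((p + p ^ 2) / 2) := by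
    have := Real.add_one_le_exp ((p + p ^ 2) / 2); linarith
  have h2 : Real.exp ((p + p ^ 2) / 2) * Real.exp ((p + p ^ 2) / 2) = Real.exp (p + p ^ 2) := by
    rw [← Real.exp_add]; ring_nf
  have hp2 : p ^ 2 ≤ p := by nlinarith
  have hp3 : p ^ 3 ≤ p := by nlinarith
  have hfac : 0 ≤ 1 - 3 * p - p ^ 2 - p ^ 3 := by nlinarith
  have hq : 1 ≤ (1 - p) * ((1 + (p + p ^ 2) / 2) * (1 + (p + p ^ 2) / 2)) := by
    nlinarith [mul_nonneg (sq_nonneg p) hfac]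
  have hq0 : (0:ℝ) ≤ 1 + (p + p ^ 2) / 2 := by nlinarith
  have hsq : (1 + (p + p ^ 2) / 2) * (1 + (p + p ^ 2) / 2) ≤
      Real.exp ((p + p ^ 2) / 2) * Real.exp ((p + p ^ 2) / 2) :=
    mul_le_mul h1 h1 hq0 (Real.exp_pos _).le
  have h3 : 1 ≤ (1 - p) * Real.exp (p + p ^ 2) := by
    rw [← h2]
    have h1p : (0:ℝ) ≤ 1 - p := by linarith
    nlinarith [mul_le_mul_of_nonneg_left hsq h1p]
  have h4 : Real.exp (-(p + p ^ 2)) * Real.exp (p + p ^ 2) = 1 := by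
    rw [← Real.exp_add]
    have he : -(p + p ^ 2) + (p + p ^ 2) = 0 := by ring
    rw [he, Real.exp_zero]
  have h5 := mul_le_mul_of_nonneg_right h3 (Real.exp_pos (-(p + p ^ 2))).le
  nlinarith [h5, h4]

private lemma frlb_aux_A_small (x : ℝ) (hx : 1 ≤ x) :
    x * Real.exp (-((Real.log 2 + 1) * x)) ≤ 1 / (2 * Real.exp 1) := by
  have hlog2 : (0.6931471803:ℝ) < Real.log 2 := Real.log_two_gt_d9
  have h1 : x ≤ Real.exp (x - 1) := by
    have := Real.add_one_le_exp (x - 1); linarith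
  have hxe : x * Real.exp (-x) ≤ 1 / Real.exp 1 := by
    have h2 : x * Real.exp (-x) ≤ Real.exp (x - 1) * Real.exp (-x) :=
      mul_le_mul_of_nonneg_right h1 (Real.exp_pos _).le
    have h3 : Real.exp (x - 1) * Real.exp (-x) = Real.exp (-1) := by
      rw [← Real.exp_add]; ring_nf
    have h4 : Real.exp (-1) = 1 / Real.exp 1 := by
      rw [Real.exp_neg, inv_eq_one_div]
    linarith
  have h5 : Real.exp (-(Real.log 2) * x) ≤ 1 / 2 := by
    have hle : Real.exp (-(Real.log 2) * x) ≤ Real.exp (-(Real.log 2)) :=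
      Real.exp_le_exp.mpr (by nlinarith)
    have he : Real.exp (-Real.log 2) = 1 / 2 := by
      rw [Real.exp_neg, Real.exp_log (by norm_num : (0:ℝ) < 2)]
      norm_num
    linarith
  have hsplit : Real.exp (-((Real.log 2 + 1) * x)) =
      Real.exp (-x) * Real.exp (-(Real.log 2) * x) := by
    rw [← Real.exp_add]; congr 1; ring
  have e2 := Real.exp_pos (-(Real.log 2) * x)
  have hxx : 0 ≤ x * Real.exp (-x) := by positivity
  have hE0 := Real.exp_pos 1
  calc x * Real.exp (-((Real.log 2 + 1) * x))
      = (x * Real.exp (-x)) * Real.exp (-(Real.log 2) * x) := by rw [hsplit]; ring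
    _ ≤ (1 / Real.exp 1) * (1 / 2) := mul_le_mul hxe h5 e2.le (by positivity)
    _ = 1 / (2 * Real.exp 1) := by field_simp

private lemma frlb_aux_inv2e : (1:ℝ) / (2 * Real.exp 1) < 0.19 := by
  have hE : (2.7182818283:ℝ) < Real.exp 1 := Real.exp_one_gt_d9
  rw [div_lt_iff₀ (by nlinarith : (0:ℝ) < 2 * Real.exp 1)]
  nlinarith

private lemma frlb_aux_main (p x U A : ℝ) (hp0 : 0 < p) (hp19 : p < 0.19)
    (hx1 : 1 ≤ x) (d : ℕ) (hdU : (d : ℝ) ≤ U) (hd1 : 1 ≤ d)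
    (hpU : p * U = x) (hA : A = x * Real.exp (-((Real.log 2 + 1) * x)))
    (hApd : A < p * d) (hpdx : p * d ≤ x) :
    A / 2 ≤ p * d * (1 - p) ^ (d - 1) := by
  have hlog2 : (0.6931471803:ℝ) < Real.log 2 := Real.log_two_gt_d9
  have h1p0 : (0:ℝ) < 1 - p := by linarith
  have hx0 : (0:ℝ) < x := by linarith
  have hA0 : 0 < A := by rw [hA]; positivity
  have hcast : ((d - 1 : ℕ) : ℝ) = (d : ℝ) - 1 := by
    rw [Nat.cast_sub hd1]; norm_num
  have hd0 : (0:ℝ) < (d : ℝ) := by exact_mod_cast hd1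
  by_cases hc : p * d ≤ 1 / 2
  · -- Bernoulli case
    have hBern : 1 + ((d - 1 : ℕ) : ℝ) * (-p) ≤ (1 + (-p)) ^ (d - 1) :=
      one_add_mul_le_pow (by linarith : (-2:ℝ) ≤ -p) (d - 1)
    rw [hcast] at hBern
    have h2 : (1:ℝ) / 2 ≤ (1 - p) ^ (d - 1) := by
      have he : 1 + ((d:ℝ) - 1) * (-p) = 1 - p * d + p := by ring
      rw [he] at hBern
      calc (1:ℝ) / 2 ≤ 1 - p * d + p := by linarith
        _ ≤ (1 + -p) ^ (d - 1) := hBern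
        _ = (1 - p) ^ (d - 1) := by ring_nf
    have hpd0 : 0 < p * d := by positivity
    calc A / 2 ≤ (p * d) * (1 / 2) := by nlinarith
      _ ≤ p * d * (1 - p) ^ (d - 1) := by nlinarith
  · push_neg at hc
    have hU0 : (0:ℝ) ≤ U := by nlinarith
    have hs1 : (1 - p) ^ U ≤ (1 - p) ^ ((d : ℝ)) :=
      Real.rpow_le_rpow_of_exponent_ge h1p0 (by linarith) hdU
    have hs2 : (1 - p) ^ ((d : ℝ)) = (1 - p) ^ (d : ℕ) := Real.rpow_natCast _ d
    have hs3 : (1 - p) ^ (d : ℕ) ≤ (1 - p) ^ (d - 1) :=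
      pow_le_pow_of_le_one h1p0.le (by linarith) (Nat.sub_le d 1)
    have hkey := frlb_aux_one_sub p hp0.le hp19
    have hs4 : Real.exp (-(p + p ^ 2)) ^ U ≤ (1 - p) ^ U :=
      Real.rpow_le_rpow (Real.exp_pos _).le hkey hU0
    have hs5 : Real.exp (-(p + p ^ 2)) ^ U = Real.exp (-(1 + p) * x) := by
      rw [← Real.exp_mul]
      congr 1
      linear_combination (-(1 + p)) * hpU
    have hlow : Real.exp (-(1 + p) * x) ≤ (1 - p) ^ (d - 1) := by
      rw [← hs5]
      calc Real.exp (-(p + p ^ 2)) ^ U ≤ (1 - p) ^ U := hs4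
        _ ≤ (1 - p) ^ ((d : ℝ)) := hs1
        _ = (1 - p) ^ (d : ℕ) := hs2
        _ ≤ (1 - p) ^ (d - 1) := hs3
    have hxexp : x ≤ Real.exp ((Real.log 2 - p) * x) := by
      have hc2 : x / 2 ≤ (Real.log 2 - p) * x := by nlinarith
      calc x ≤ Real.exp (x / 2) := frlb_aux_exp_half x
        _ ≤ Real.exp ((Real.log 2 - p) * x) := Real.exp_le_exp.mpr hc2
    have hfin : A ≤ Real.exp (-(1 + p) * x) := by
      have hsplit : Real.exp (-(1 + p) * x) =
          Real.exp ((Real.log 2 - p) * x) * Real.exp (-((Real.log 2 + 1) * x)) := by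
        rw [← Real.exp_add]; congr 1; ring
      rw [hA, hsplit]
      have := Real.exp_pos (-((Real.log 2 + 1) * x))
      nlinarith
    have hpow0 : (0:ℝ) < (1 - p) ^ (d - 1) := pow_pos h1p0 _
    calc A / 2 ≤ Real.exp (-(1 + p) * x) / 2 := by linarith
      _ ≤ (1 - p) ^ (d - 1) / 2 := by linarith
      _ ≤ (p * d) * (1 - p) ^ (d - 1) := by
          have := mul_le_mul_of_nonneg_right hc.le hpow0.le
          linarith
      _ = p * d * (1 - p) ^ (d - 1) := by ring

theorem frlb_per_round_success (Δ : ℝ) (hΔ : 2 * Real.exp 1 ≤ Δ)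
    (τ : ℕ) (hτ : 0 < τ) (hτle : (τ : ℝ) ≤ Real.logb (2 * Real.exp 1) Δ)
    (i : ℕ) (hi : i ∈ Finset.Icc 1 τ)
    (p : ℝ) (hp : p = Δ ^ (-(i : ℝ) / τ) * Real.logb (2 * Real.exp 1) Δ / τ)
    (d : ℕ) (hd1 : Δ ^ (((i : ℝ) - 1) / τ) < (d : ℝ)) (hd2 : (d : ℝ) ≤ Δ ^ ((i : ℝ) / τ)) :
    p * d * (1 - p) ^ (d - 1) ≥
      Real.logb (2 * Real.exp 1) Δ / (2 * Δ ^ ((1 : ℝ) / τ) * τ) := by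
  have hE : (2.7182818283:ℝ) < Real.exp 1 := Real.exp_one_gt_d9
  have hlog2 : (0.6931471803:ℝ) < Real.log 2 := Real.log_two_gt_d9
  have h2e1 : (1:ℝ) < 2 * Real.exp 1 := by nlinarith
  have hΔ1 : (1:ℝ) < Δ := lt_of_lt_of_le h2e1 hΔ
  have hΔ0 : (0:ℝ) < Δ := by linarith
  have hτ0 : (0:ℝ) < (τ:ℝ) := by exact_mod_cast hτ
  set β := Real.logb (2 * Real.exp 1) Δ with hβdef
  have hlog2e : Real.log (2 * Real.exp 1) = Real.log 2 + 1 := by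
    rw [Real.log_mul two_ne_zero (Real.exp_ne_zero 1), Real.log_exp]
  have hlog2e_pos : (0:ℝ) < Real.log 2 + 1 := by linarith
  have hlogΔ : Real.log Δ = β * (Real.log 2 + 1) := by
    rw [hβdef, Real.logb, hlog2e]
    field_simp
  have hβ1 : (1:ℝ) ≤ β := by
    rw [hβdef, Real.logb, hlog2e, le_div_iff₀ hlog2e_pos, one_mul]
    calc Real.log 2 + 1 = Real.log (2 * Real.exp 1) := hlog2e.symm
      _ ≤ Real.log Δ := Real.log_le_log (by positivity) hΔ
  set x := β / (τ:ℝ) with hxdef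
  have hx1 : (1:ℝ) ≤ x := by
    rw [hxdef, le_div_iff₀ hτ0, one_mul]; exact hτle
  have hx0 : (0:ℝ) < x := by linarith
  have hi1 : 1 ≤ i := (Finset.mem_Icc.mp hi).1
  have hi1' : (1:ℝ) ≤ (i:ℝ) := by exact_mod_cast hi1
  have hrw : ∀ t : ℝ, Δ ^ t = Real.exp (t * (β * (Real.log 2 + 1))) := by
    intro t
    rw [Real.rpow_def_of_pos hΔ0, hlogΔ]
    congr 1; ring
  have hmul : Δ ^ (-(i:ℝ)/τ) * Δ ^ ((i:ℝ)/τ) = 1 := by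
    rw [← Real.rpow_add hΔ0]
    have he : -(i:ℝ)/τ + (i:ℝ)/τ = 0 := by ring
    rw [he, Real.rpow_zero]
  have hpU : p * Δ ^ ((i:ℝ)/τ) = x := by
    rw [hp, hxdef]
    field_simp
    rw [← neg_div]; exact hmul
  have hmul2 : Δ ^ (-(i:ℝ)/τ) * Δ ^ (((i:ℝ)-1)/τ) = Δ ^ (-(1:ℝ)/τ) := by
    rw [← Real.rpow_add hΔ0]
    congr 1; ring
  have hneg1τ : Δ ^ (-(1:ℝ)/τ) = Real.exp (-((Real.log 2 + 1) * x)) := by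
    rw [hrw, hxdef]; congr 1; ring
  have hpos1τ : Δ ^ ((1:ℝ)/τ) = Real.exp ((Real.log 2 + 1) * x) := by
    rw [hrw, hxdef]; congr 1; ring
  set A := x * Real.exp (-((Real.log 2 + 1) * x)) with hAdef
  have hpL : p * Δ ^ (((i:ℝ)-1)/τ) = A := by
    rw [hp, hAdef, ← hneg1τ, hxdef]
    field_simp
    rw [← neg_div, ← neg_div]; exact hmul2
  have hp0 : 0 < p := by
    rw [hp]
    have h1 : (0:ℝ) < Δ ^ (-(i:ℝ)/τ) := Real.rpow_pos_of_pos hΔ0 _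
    have hb0 : (0:ℝ) < β := by linarith
    positivity
  have hpA : p ≤ A := by
    have h1 : Δ ^ (-(i:ℝ)/τ) ≤ Δ ^ (-(1:ℝ)/τ) := by
      apply Real.rpow_le_rpow_of_exponent_le hΔ1.le
      rw [div_le_div_iff_of_pos_right hτ0]; linarith
    have hb0 : (0:ℝ) < β := by linarith
    calc p = β * Δ ^ (-(i:ℝ)/τ) / τ := by rw [hp]; ring
      _ ≤ β * Δ ^ (-(1:ℝ)/τ) / τ := by gcongr
      _ = x * Δ ^ (-(1:ℝ)/τ) := by rw [hxdef]; ring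
      _ = A := by rw [hAdef, hneg1τ]
  have hAsmall : A ≤ 1 / (2 * Real.exp 1) := frlb_aux_A_small x hx1
  have hp19 : p < 0.19 := lt_of_le_of_lt (le_trans hpA hAsmall) frlb_aux_inv2e
  have hL1 : (1:ℝ) ≤ Δ ^ (((i:ℝ)-1)/τ) := by
    apply Real.one_le_rpow hΔ1.le
    have h1 : (0:ℝ) ≤ (i:ℝ) - 1 := by linarith
    positivity
  have hd1' : (1:ℝ) < (d:ℝ) := lt_of_le_of_lt hL1 hd1
  have hdge1 : 1 ≤ d := by exact_mod_cast hd1'.le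
  have hA_lt_pd : A < p * d := by
    rw [← hpL]; exact (mul_lt_mul_iff_right₀ hp0).mpr hd1
  have hpd_le_x : p * d ≤ x := by
    rw [← hpU]; exact (mul_le_mul_iff_right₀ hp0).mpr hd2
  have hRHS : β / (2 * Δ ^ ((1:ℝ)/τ) * τ) = A / 2 := by
    rw [hpos1τ, hAdef, Real.exp_neg, hxdef]
    have he := Real.exp_pos ((Real.log 2 + 1) * (β / (τ:ℝ)))
    field_simp
  rw [ge_iff_le, hRHS]
  exact frlb_aux_main p x (Δ ^ ((i:ℝ)/τ)) A hp0 hp19 hx1 d hd2 hdge1 hpU hAdef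
    hA_lt_pd hpd_le_x
end

section
/- Let Δ̇ ≥ 9 be real, τ a positive integer with τ ≤ log₂(Δ̇)/16, and set y = ⌊log₂(⌊ln(Δ̇)/τ⌋)⌋ + 1. Let p ∈ (0,1) and let a ≤ log₂(Δ̇) be an integer with a ≥ log₂(1/p) + y. Then 2^a · p · (1-p)^{2^a - 1} ≤ 32·ln(Δ̇)/(Δ̇^{1/τ}·τ). -/
set_option maxHeartbeats 800000

theorem lower_bound_case2 (Δ : ℝ) (hΔ : 9 ≤ Δ) (τ : ℕ) (hτ : 0 < τ)
    (hτle : (τ : ℝ) ≤ Real.logb 2 Δ / 16)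
    (y : ℤ) (hy : y = ⌊Real.logb 2 (⌊Real.log Δ / τ⌋ : ℝ)⌋ + 1)
    (a : ℤ) (p : ℝ) (hp : p ∈ Set.Ioo (0 : ℝ) 1)
    (haΔ : (a : ℝ) ≤ Real.logb 2 Δ)
    (ha : (a : ℝ) ≥ Real.logb 2 (1 / p) + y) :
    (2 : ℝ) ^ (a : ℝ) * p * (1 - p) ^ ((2 : ℝ) ^ (a : ℝ) - 1) ≤
      32 * Real.log Δ / (Δ ^ ((1 : ℝ) / τ) * τ) := by
  obtain ⟨hp0, hp1⟩ := hp
  have hΔ0 : (0 : ℝ) < Δ := by linarith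
  have hΔ1 : (1 : ℝ) < Δ := by linarith
  have hlogΔ : 0 < Real.log Δ := Real.log_pos hΔ1
  have hτR : (0 : ℝ) < (τ : ℝ) := by exact_mod_cast hτ
  have hlog2 : (0 : ℝ) < Real.log 2 := Real.log_pos one_lt_two
  have hlog2d : (0.6931471803 : ℝ) < Real.log 2 := Real.log_two_gt_d9
  -- ln Δ / τ ≥ 16 ln 2 > 11
  have hlb : 16 * Real.log 2 ≤ Real.log Δ / τ := by
    rw [Real.logb, div_div, le_div_iff₀ (by positivity)] at hτle
    rw [le_div_iff₀ hτR]
    nlinarith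
  have hlb11 : (11 : ℝ) ≤ Real.log Δ / τ := by nlinarith
  set m : ℤ := ⌊Real.log Δ / τ⌋ with hm
  have hm11 : (11 : ℝ) ≤ (m : ℝ) := by
    exact_mod_cast Int.le_floor.mpr (by exact_mod_cast hlb11)
  have hmle : (m : ℝ) ≤ Real.log Δ / τ := Int.floor_le _
  have hmgt : Real.log Δ / τ - 1 < (m : ℝ) := by
    have := Int.lt_floor_add_one (Real.log Δ / τ); linarith
  set q : ℝ := (2 : ℝ) ^ (a : ℝ) * p with hqdef
  -- q ≥ 2^y ≥ m
  have h2y : (m : ℝ) ≤ (2 : ℝ) ^ (y : ℝ) := by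
    have hm0 : (0 : ℝ) < (m : ℝ) := by linarith
    have h1 : Real.logb 2 (m : ℝ) < (y : ℝ) := by
      rw [hy]; push_cast
      exact Int.lt_floor_add_one _
    calc (m : ℝ) = (2 : ℝ) ^ Real.logb 2 (m : ℝ) :=
          (Real.rpow_logb (by norm_num) (by norm_num) hm0).symm
      _ ≤ (2 : ℝ) ^ (y : ℝ) :=
          Real.rpow_le_rpow_of_exponent_le (by norm_num) h1.le
  have hqy : (2 : ℝ) ^ (y : ℝ) ≤ q := by
    have h1 : (2 : ℝ) ^ (Real.logb 2 (1 / p) + (y : ℝ)) ≤ (2 : ℝ) ^ (a : ℝ) :=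
      Real.rpow_le_rpow_of_exponent_le (by norm_num) ha
    rw [Real.rpow_add (by norm_num), Real.rpow_logb (by norm_num) (by norm_num)
      (by positivity)] at h1
    have : (1 / p) * (2 : ℝ) ^ (y : ℝ) * p ≤ (2 : ℝ) ^ (a : ℝ) * p :=
      mul_le_mul_of_nonneg_right h1 hp0.le
    rw [hqdef]
    field_simp at this ⊢
    linarith
  have hmq : (m : ℝ) ≤ q := le_trans h2y hqy
  have hq11 : (11 : ℝ) ≤ q := le_trans hm11 hmq
  have h2a : (2 : ℝ) ^ (a : ℝ) = q / p := by field_simp [hqdef]; exact hqdef.symm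
  have h2a1 : (1 : ℝ) ≤ (2 : ℝ) ^ (a : ℝ) - 1 := by
    rw [h2a]
    have : q ≤ q / p := by
      rw [le_div_iff₀ hp0]; nlinarith
    linarith
  -- Step 1: (1-p)^(2^a-1) ≤ exp(-(q - p))
  have step1 : (1 - p) ^ ((2 : ℝ) ^ (a : ℝ) - 1) ≤ Real.exp (-(q - p)) := by
    have hbase : (1 - p) ≤ Real.exp (-p) := by
      have := Real.add_one_le_exp (-p); linarith
    calc (1 - p) ^ ((2 : ℝ) ^ (a : ℝ) - 1)
        ≤ (Real.exp (-p)) ^ ((2 : ℝ) ^ (a : ℝ) - 1) :=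
          Real.rpow_le_rpow (by linarith) hbase (by linarith)
      _ = Real.exp (-p * ((2 : ℝ) ^ (a : ℝ) - 1)) := by
          rw [← Real.exp_mul]
      _ = Real.exp (-(q - p)) := by
          rw [h2a]; congr 1; field_simp
  -- decreasing z e^{-z}
  have key : ∀ u v : ℝ, 1 ≤ u → u ≤ v → v * Real.exp (-v) ≤ u * Real.exp (-u) := by
    intro u v hu huv
    have h := Real.add_one_le_exp (v - u)
    have h1 : v ≤ u * Real.exp (v - u) := by nlinarith [Real.exp_pos (v - u)]
    calc v * Real.exp (-v) ≤ u * Real.exp (v - u) * Real.exp (-v) :=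
          mul_le_mul_of_nonneg_right h1 (Real.exp_pos _).le
      _ = u * Real.exp (-u) := by rw [mul_assoc, ← Real.exp_add]; ring_nf
  -- LHS ≤ e * (q * exp (-q)) ≤ e * (m * exp (-m))
  have hqpos : 0 < q := by linarith
  have chain1 : (2 : ℝ) ^ (a : ℝ) * p * (1 - p) ^ ((2 : ℝ) ^ (a : ℝ) - 1)
      ≤ Real.exp 1 * ((m : ℝ) * Real.exp (-(m : ℝ))) := by
    calc (2 : ℝ) ^ (a : ℝ) * p * (1 - p) ^ ((2 : ℝ) ^ (a : ℝ) - 1)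
        = q * (1 - p) ^ ((2 : ℝ) ^ (a : ℝ) - 1) := by rw [hqdef]
      _ ≤ q * Real.exp (-(q - p)) := mul_le_mul_of_nonneg_left step1 hqpos.le
      _ = Real.exp p * (q * Real.exp (-q)) := by
          rw [show -(q - p) = p + -q by ring, Real.exp_add]; ring
      _ ≤ Real.exp 1 * (q * Real.exp (-q)) := by
          have h1 : Real.exp p ≤ Real.exp 1 := Real.exp_le_exp.mpr hp1.le
          have h2 : 0 ≤ q * Real.exp (-q) := by positivity
          exact mul_le_mul_of_nonneg_right h1 h2
      _ ≤ Real.exp 1 * ((m : ℝ) * Real.exp (-(m : ℝ))) := by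
          have := key (m : ℝ) q (by linarith) hmq
          exact mul_le_mul_of_nonneg_left this (Real.exp_pos _).le
  -- Step 3: exp(-m) ≤ e * Δ^{-1/τ}
  have hΔpow : Δ ^ (-((1 : ℝ) / τ)) = Real.exp (-(Real.log Δ / τ)) := by
    rw [Real.rpow_def_of_pos hΔ0]; congr 1; field_simp
  have step3 : Real.exp (-(m : ℝ)) ≤ Real.exp 1 * Δ ^ (-((1 : ℝ) / τ)) := by
    rw [hΔpow, ← Real.exp_add]
    apply Real.exp_le_exp.mpr
    linarith
  have hΔpow_pos : (0 : ℝ) < Δ ^ ((1 : ℝ) / τ) := Real.rpow_pos_of_pos hΔ0 _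
  have hΔnegpow : Δ ^ (-((1 : ℝ) / τ)) = 1 / Δ ^ ((1 : ℝ) / τ) := by
    exact (Real.rpow_neg hΔ0.le _).trans (inv_eq_one_div _)
  have he : Real.exp 1 < 2.7182818286 := Real.exp_one_lt_d9
  have he0 : 0 < Real.exp 1 := Real.exp_pos 1
  calc (2 : ℝ) ^ (a : ℝ) * p * (1 - p) ^ ((2 : ℝ) ^ (a : ℝ) - 1)
      ≤ Real.exp 1 * ((m : ℝ) * Real.exp (-(m : ℝ))) := chain1
    _ ≤ Real.exp 1 * ((m : ℝ) * (Real.exp 1 * Δ ^ (-((1 : ℝ) / τ)))) := by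
        apply mul_le_mul_of_nonneg_left _ he0.le
        exact mul_le_mul_of_nonneg_left step3 (by linarith)
    _ = Real.exp 1 * Real.exp 1 * (m : ℝ) * (1 / Δ ^ ((1 : ℝ) / τ)) := by
        rw [hΔnegpow]; ring
    _ ≤ 32 * (Real.log Δ / τ) * (1 / Δ ^ ((1 : ℝ) / τ)) := by
        apply mul_le_mul_of_nonneg_right _ (by positivity)
        have he2 : Real.exp 1 * Real.exp 1 < 8 := by nlinarith
        nlinarith [he2, hmle, hm11, he0, mul_le_mul_of_nonneg_left hmle (mul_pos he0 he0).le]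
    _ = 32 * Real.log Δ / (Δ ^ ((1 : ℝ) / τ) * τ) := by
        field_simp
end

section
/- Let k ≥ 2 be a real number and let d, d' be reals with d ≥ 1. Suppose 1/p ≥ 2d and 1/(k·p) ≤ 2d for some p ∈ (0, 1/2], and d/2 ≤ d' ≤ 2d. Then p·d'·(1-p)^{d'} ≥ min{ (2e)^{-1}, (2e)^{-1/(4k)}/(4k) } ≥ 1/(8·e·k). -/
open Real Set
set_option maxHeartbeats 1000000

theorem robust_degree_change (k : ℝ) (hk : 2 ≤ k) (p : ℝ) (hp0 : 0 < p) (hp : p ≤ 1/2)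
    (d d' : ℝ) (hd1 : 1 ≤ d) (hpd : 1 / p ≥ 2 * d) (hkp : 1 / (k * p) ≤ 2 * d)
    (hd'1 : d / 2 ≤ d') (hd'2 : d' ≤ 2 * d) :
    p * d' * (1 - p) ^ (d' : ℝ) ≥
        min ((2 * Real.exp 1)⁻¹) ((2 * Real.exp 1) ^ (-(1 / (4 * k)) : ℝ) / (4 * k)) ∧
      min ((2 * Real.exp 1)⁻¹) ((2 * Real.exp 1) ^ (-(1 / (4 * k)) : ℝ) / (4 * k)) ≥
        1 / (8 * Real.exp 1 * k) := by
  have he : (0:ℝ) < Real.exp 1 := Real.exp_pos 1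
  have hk0 : (0:ℝ) < k := by linarith
  have hd0 : (0:ℝ) < d := by linarith
  have hd'0 : (0:ℝ) < d' := by linarith
  have hlog2 : Real.log 2 ≤ 1 := by
    have := Real.log_le_sub_one_of_pos (by norm_num : (0:ℝ) < 2)
    linarith
  have hlog2pos : (0:ℝ) < Real.log 2 := Real.log_pos (by norm_num)
  set c : ℝ := Real.log 2 + 1 with hcdef
  have hc0 : (0:ℝ) ≤ c := by positivity
  have hce : Real.log (2 * Real.exp 1) = c := by
    rw [Real.log_mul (by norm_num) he.ne', Real.log_exp]
  have h2e0 : (0:ℝ) < 2 * Real.exp 1 := by positivity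
  have h2e1 : (1:ℝ) ≤ 2 * Real.exp 1 := by nlinarith [Real.add_one_le_exp (1:ℝ)]
  have hexpc : Real.exp c = 2 * Real.exp 1 := by rw [← hce, Real.exp_log h2e0]
  set a : ℝ := 1 / (4 * k) with hadef
  have ha0 : (0:ℝ) < a := by positivity
  have ha1 : a ≤ 1 := by
    rw [hadef, div_le_one (by positivity)]; linarith
  set α : ℝ := p * d' with hαdef
  have hα0 : (0:ℝ) < α := by positivity
  have hpd' : 2 * d * p ≤ 1 := by
    rw [ge_iff_le, le_div_iff₀ hp0] at hpd; exact hpd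
  have hα1 : α ≤ 1 := by rw [hαdef]; nlinarith
  have hkp' : 1 ≤ 2 * d * (k * p) := by
    rw [div_le_iff₀ (by positivity)] at hkp; linarith
  have hαa : a ≤ α := by
    rw [hadef, hαdef, div_le_iff₀ (by positivity : (0:ℝ) < 4 * k)]
    nlinarith [mul_nonneg (mul_nonneg hk0.le hp0.le) (by linarith : (0:ℝ) ≤ d' - d/2)]
  -- exp (-(c*p)) ≤ 1 - p
  have hexp_half : Real.exp (-(c/2)) ≤ 1/2 := by
    have h1 : Real.exp (-(c/2)) ≤ Real.exp (-Real.log 2) := by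
      apply Real.exp_le_exp.2; rw [hcdef]; linarith
    have h2 : Real.exp (-Real.log 2) = 1/2 := by
      rw [Real.exp_neg, Real.exp_log (by norm_num : (0:ℝ) < 2)]; norm_num
    linarith
  have hkey : Real.exp (-(c * p)) ≤ 1 - p := by
    have hconv := convexOn_exp.2 (Set.mem_univ (0:ℝ)) (Set.mem_univ (-(c/2)))
      (by linarith : (0:ℝ) ≤ 1 - 2*p) (by linarith : (0:ℝ) ≤ 2*p) (by ring)
    simp only [smul_eq_mul] at hconv
    have harg : (1 - 2*p) * 0 + 2*p * (-(c/2)) = -(c * p) := by ring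
    rw [harg, Real.exp_zero] at hconv
    nlinarith
  have hlogp : -(c * p) ≤ Real.log (1 - p) := by
    rw [← Real.exp_le_exp, Real.exp_log (by linarith : (0:ℝ) < 1 - p)]
    exact hkey
  -- (1-p)^d' ≥ exp (-(c*α))
  have hpow : Real.exp (-(c * α)) ≤ (1 - p) ^ (d' : ℝ) := by
    rw [Real.rpow_def_of_pos (by linarith : (0:ℝ) < 1 - p)]
    apply Real.exp_le_exp.2
    have h := mul_le_mul_of_nonneg_right hlogp hd'0.le
    calc -(c * α) = -(c * p) * d' := by rw [hαdef]; ring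
      _ ≤ Real.log (1 - p) * d' := h
  -- concavity of log x - c x
  have hg : ConcaveOn ℝ (Set.Ioi 0) (fun x : ℝ => Real.log x - c * x) := by
    have h1 : ConcaveOn ℝ (Set.Ioi 0) Real.log := strictConcaveOn_log_Ioi.concaveOn
    have h2 : ConvexOn ℝ (Set.Ioi (0:ℝ)) (fun x : ℝ => c * x) := by
      have := (convexOn_id (convex_Ioi (0:ℝ))).smul hc0
      simpa [smul_eq_mul] using this
    exact h1.sub h2
  have hseg : α ∈ segment ℝ a 1 := by
    rw [segment_eq_Icc ha1]; exact ⟨hαa, hα1⟩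
  have hmin := hg.ge_on_segment (Set.mem_Ioi.2 ha0) (Set.mem_Ioi.2 one_pos) hseg
  have hmin' : min (Real.exp (Real.log a - c * a)) (Real.exp (Real.log 1 - c * 1))
      ≤ Real.exp (Real.log α - c * α) := by
    rw [← Real.exp_monotone.map_min]
    exact Real.exp_le_exp.2 hmin
  have hαval : α * Real.exp (-(c * α)) = Real.exp (Real.log α - c * α) := by
    rw [show Real.log α - c * α = Real.log α + -(c * α) by ring, Real.exp_add,
      Real.exp_log hα0]
  have hrpowa : (2 * Real.exp 1) ^ (-a : ℝ) = Real.exp (-(c * a)) := by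
    rw [Real.rpow_def_of_pos h2e0, hce]; ring_nf
  have hexpga : Real.exp (Real.log a - c * a) = (2 * Real.exp 1) ^ (-a : ℝ) * a := by
    rw [show Real.log a - c * a = Real.log a + -(c * a) by ring, Real.exp_add,
      Real.exp_log ha0, hrpowa]; ring
  have hexpg1 : Real.exp (Real.log 1 - c * 1) = (2 * Real.exp 1)⁻¹ := by
    rw [show Real.log 1 - c * 1 = -c by simp, Real.exp_neg, hexpc]
  constructor
  · rw [ge_iff_le]
    have hdiv : (2 * Real.exp 1) ^ (-a : ℝ) / (4 * k) = (2 * Real.exp 1) ^ (-a : ℝ) * a := by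
      rw [hadef]; ring
    calc min ((2 * Real.exp 1)⁻¹) ((2 * Real.exp 1) ^ (-a : ℝ) / (4 * k))
        = min (Real.exp (Real.log a - c * a)) (Real.exp (Real.log 1 - c * 1)) := by
          rw [hexpga, hexpg1, hdiv, min_comm]
      _ ≤ Real.exp (Real.log α - c * α) := hmin'
      _ = α * Real.exp (-(c * α)) := hαval.symm
      _ ≤ α * (1 - p) ^ (d' : ℝ) := mul_le_mul_of_nonneg_left hpow hα0.le
      _ = p * d' * (1 - p) ^ (d' : ℝ) := by rw [hαdef]
  · rw [ge_iff_le]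
    apply le_min
    · rw [← one_div]
      exact one_div_le_one_div_of_le h2e0 (by nlinarith)
    · have h2 : (2 * Real.exp 1)⁻¹ ≤ (2 * Real.exp 1) ^ (-a : ℝ) := by
        rw [← Real.rpow_neg_one]
        exact Real.rpow_le_rpow_of_exponent_le h2e1 (by linarith)
      have h3 : 1 / (8 * Real.exp 1 * k) = (2 * Real.exp 1)⁻¹ / (4 * k) := by
        field_simp; ring
      rw [h3]
      gcongr
end
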